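/- arXiv:1103.0479 — 6 statements merged into one kernel-verified Lean document; each statement's English description precedes it below -/
import Mathlib

section
/- If (a,c) is a non-adjacent domination pair in a finite simple graph Γ, the vertex c is not isolated, and no vertex adjacent to c dominates c, then there exist vertices b and d such that (a,b,c,d) is a domination diamond: a,b,c,d are pairwise distinct, a~b, b~c, c~d, d~a, a is not adjacent to c, b is not adjacent to d, and a dominates c. -/
namespace SimpleGraph

variable {V : Type*} {G : SimpleGraph V} {a c e : V}

theorem Adj.adj_of_dominates_of_not_adj (he : G.Adj e c) (hnadj : ¬ G.Adj a c)
    (hdom : ∀ e, G.Adj e c → G.Adj e a ∨ e = a) : G.Adj e a :=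
  (hdom e he).resolve_right (by rintro rfl; exact hnadj he)

end SimpleGraph

theorem exists_domination_diamond_general {V : Type*} (G : SimpleGraph V) (a c : V)
    (hnadj : ¬ G.Adj a c)
    (hdom : ∀ e, G.Adj e c → G.Adj e a ∨ e = a)
    (hnotiso : ∃ e, G.Adj c e)
    (hnoadjdom : ∀ e, G.Adj e c → ¬ (∀ f, G.Adj f c → G.Adj f e ∨ f = e)) :
    ∃ b d : V, a ≠ b ∧ a ≠ d ∧ b ≠ c ∧ b ≠ d ∧ c ≠ d ∧
      G.Adj a b ∧ G.Adj b c ∧ G.Adj c d ∧ G.Adj d a ∧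
      ¬ G.Adj a c ∧ ¬ G.Adj b d ∧ (∀ e, G.Adj e c → G.Adj e a ∨ e = a) := by
  obtain ⟨b, hcb⟩ := hnotiso
  have hbc : G.Adj b c := hcb.symm
  obtain ⟨d, hdc, hdb, hdb_ne⟩ : ∃ d, G.Adj d c ∧ ¬ G.Adj d b ∧ d ≠ b := by
    have hb := hnoadjdom b hbc
    push Not at hb
    exact hb
  have hba := hbc.adj_of_dominates_of_not_adj hnadj hdom
  have hda := hdc.adj_of_dominates_of_not_adj hnadj hdom
  exact ⟨b, d, hba.ne', hda.ne', hbc.ne, hdb_ne.symm, hdc.ne', hba.symm, hbc, hdc.symm, hda,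
    hnadj, fun h => hdb h.symm, hdom⟩

/-- If `(a, c)` is a non-adjacent domination pair, `c` is not isolated, and no vertex
adjacent to `c` dominates `c`, then there is a domination diamond `(a, b, c, d)`. -/
theorem exists_domination_diamond {V : Type*} [Fintype V] (G : SimpleGraph V) (a c : V)
    (hac : a ≠ c) (hnadj : ¬ G.Adj a c)
    (hdom : ∀ e, G.Adj e c → G.Adj e a ∨ e = a)
    (hnotiso : ∃ e, G.Adj c e)
    (hnoadjdom : ∀ e, G.Adj e c → ¬ (∀ f, G.Adj f c → G.Adj f e ∨ f = e)) :
    ∃ b d : V, a ≠ b ∧ a ≠ d ∧ b ≠ c ∧ b ≠ d ∧ c ≠ d ∧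
      G.Adj a b ∧ G.Adj b c ∧ G.Adj c d ∧ G.Adj d a ∧
      ¬ G.Adj a c ∧ ¬ G.Adj b d ∧ (∀ e, G.Adj e c → G.Adj e a ∨ e = a) :=
  exists_domination_diamond_general G a c hnadj hdom hnotiso hnoadjdom
end

section
/- In the Erdős–Rényi random graph G(n,p) with n ≥ 4, the expected number of ordered domination diamonds (a,b,c,d) is n(n−1)(n−2)(n−3) · p⁴(1−p)²(p+(1−p)²)^{n−4}. -/
/-!
Encode a graph by the indicator function of its edge set. The weight
`p ^ e(G) * (1 - p) ^ (C(n,2) - e(G))` is then the product over all potential edges of `p` or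
`1 - p`, and by linearity the expected count is the sum, over quadruples of distinct vertices,
of the weight of the graphs in which `(a, b, c, d)` is a domination diamond. For a fixed
quadruple this event is the intersection of two kinds of events depending on pairwise disjoint
sets of edges: `a, b, c, d` induce the square `a b c d` (six prescribed edge states, weight
`p ^ 4 * (1 - p) ^ 2`), and for each of the `n - 4` remaining vertices `v`, `v ~ c` implies
`v ~ a` (weight `1 - p * (1 - p) = p + (1 - p) ^ 2`). Independence multiplies these weights.
-/

open Finset

section PiExpect

variable {ι α : Type*}

theorem DependsOn.finset_prod {J : Type*} {t : Finset J} {g : J → (ι → α) → ℝ} {s : Set ι}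
    (hg : ∀ j ∈ t, DependsOn (g j) s) : DependsOn (fun f => ∏ j ∈ t, g j f) s :=
  fun _ _ h => prod_congr rfl fun j hj => hg j hj h

variable [Fintype ι] [DecidableEq ι] [Fintype α]

def piExpect (w : ι → α → ℝ) (g : (ι → α) → ℝ) : ℝ :=
  ∑ f : ι → α, (∏ i, w i (f i)) * g f

variable (w : ι → α → ℝ)

theorem piExpect_prod_apply (φ : ι → α → ℝ) :
    piExpect w (fun f => ∏ i, φ i (f i)) = ∏ i, ∑ x, w i x * φ i x := by
  simp only [piExpect, Fintype.prod_sum, prod_mul_distrib]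

theorem sum_prod_weight_eq_one (hw : ∀ i, ∑ x, w i x = 1) :
    ∑ f : ι → α, ∏ i, w i (f i) = 1 := by
  simpa [piExpect, hw] using piExpect_prod_apply w fun _ _ => 1

theorem piExpect_const (hw : ∀ i, ∑ x, w i x = 1) (c : ℝ) : piExpect w (fun _ => c) = c := by
  rw [piExpect, ← sum_mul, sum_prod_weight_eq_one w hw, one_mul]

theorem piExpect_sub (g h : (ι → α) → ℝ) :
    piExpect w (fun f => g f - h f) = piExpect w g - piExpect w h := by
  simp only [piExpect, mul_sub, sum_sub_distrib]

variable {w}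

theorem piExpect_mul_of_dependsOn (hw : ∀ i, ∑ x, w i x = 1) {s : Set ι}
    {g h : (ι → α) → ℝ} (hg : DependsOn g s) (hh : DependsOn h sᶜ) :
    piExpect w (fun f => g f * h f) = piExpect w g * piExpect w h := by
  classical
  rcases isEmpty_or_nonempty (ι → α) with _ | hne
  · simp [piExpect]
  obtain ⟨f₀⟩ := hne
  set e := Equiv.piEquivPiSubtypeProd (· ∈ s) (fun _ => α)
  have hsum (F : (ι → α) → ℝ) : ∑ f, F f = ∑ u, ∑ v, F (e.symm (u, v)) := by
    rw [← e.symm.sum_comp, Fintype.sum_prod_type]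
  have hweight (u v) : ∏ i, w i (e.symm (u, v) i)
      = (∏ i : s, w i (u i)) * ∏ i : {i // i ∉ s}, w i (v i) := by
    rw [← Fintype.prod_subtype_mul_prod_subtype (· ∈ s)]
    congr 1 <;> refine prod_congr rfl fun i _ => ?_ <;> simp [e, i.2]
  have hg' (u v) : g (e.symm (u, v)) = g (e.symm (u, (e f₀).2)) :=
    hg fun i hi => by simp [e, hi]
  have hh' (u v) : h (e.symm (u, v)) = h (e.symm ((e f₀).1, v)) :=
    hh fun i hi => by simp [e, Set.notMem_of_mem_compl hi]
  have hA := sum_prod_weight_eq_one (fun i : {i // i ∈ s} => w i) (fun i => hw i)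
  have hB := sum_prod_weight_eq_one (fun i : {i // i ∉ s} => w i) (fun i => hw i)
  simp only [piExpect, hsum (fun f => _ * _), hweight, hg', hh']
  simp only [mul_assoc, ← mul_sum, ← sum_mul, hA, hB, one_mul]
  rw [sum_mul_sum]
  simp only [mul_sum]
  exact sum_congr rfl fun u _ => sum_congr rfl fun v _ => by ring

theorem piExpect_prod_of_dependsOn (hw : ∀ i, ∑ x, w i x = 1) {J : Type*} (t : Finset J)
    {S : J → Set ι} {g : J → (ι → α) → ℝ} (hS : (t : Set J).PairwiseDisjoint S)
    (hg : ∀ j ∈ t, DependsOn (g j) (S j)) :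
    piExpect w (fun f => ∏ j ∈ t, g j f) = ∏ j ∈ t, piExpect w (g j) := by
  classical
  induction t using Finset.induction_on with
  | empty => simp [piExpect_const w hw]
  | insert a t ha ih =>
    have hrest : DependsOn (fun f => ∏ j ∈ t, g j f) (S a)ᶜ :=
      DependsOn.finset_prod fun j hj => (hg j (mem_insert_of_mem hj)).mono <|
        Set.subset_compl_iff_disjoint_right.mpr <|
          hS (by simp [hj]) (by simp) (ne_of_mem_of_not_mem hj ha)
    simp only [prod_insert ha]
    rw [piExpect_mul_of_dependsOn hw (hg a (mem_insert_self a t)) hrest,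
      ih (hS.subset (by simp)) fun j hj => hg j (mem_insert_of_mem hj)]

end PiExpect

section Bernoulli

def bernoulliWeight (p : ℝ) (b : Bool) : ℝ := if b then p else 1 - p

variable {ι : Type*} [Fintype ι] [DecidableEq ι] (p : ℝ)

theorem sum_bernoulliWeight : ∑ b, bernoulliWeight p b = 1 := by
  simp [bernoulliWeight]

theorem piExpect_bernoulliWeight_cylinder {T₁ T₀ : Finset ι} (h : Disjoint T₁ T₀) :
    piExpect (fun _ => bernoulliWeight p)
        (fun f => if (∀ i ∈ T₁, f i = true) ∧ ∀ i ∈ T₀, f i = false then 1 else 0)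
      = p ^ #T₁ * (1 - p) ^ #T₀ := by
  have hind (f : ι → Bool) : (if (∀ i ∈ T₁, f i = true) ∧ ∀ i ∈ T₀, f i = false then 1 else 0)
      = ∏ i, if (i ∈ T₁ → f i = true) ∧ (i ∈ T₀ → f i = false) then (1 : ℝ) else 0 := by
    rw [Fintype.prod_boole]
    simp only [forall_and]
  have hfactor (i : ι) : ∑ b, bernoulliWeight p b *
      (if (i ∈ T₁ → b = true) ∧ (i ∈ T₀ → b = false) then (1 : ℝ) else 0)
      = (if i ∈ T₁ then p else 1) * (if i ∈ T₀ then 1 - p else 1) := by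
    by_cases h₁ : i ∈ T₁
    · simp [bernoulliWeight, h₁, disjoint_left.mp h h₁]
    · by_cases h₀ : i ∈ T₀ <;> simp [bernoulliWeight, h₁, h₀]
  simp only [hind]
  rw [piExpect_prod_apply _ fun i b =>
    if (i ∈ T₁ → b = true) ∧ (i ∈ T₀ → b = false) then (1 : ℝ) else 0]
  simp only [hfactor, prod_mul_distrib, Fintype.prod_ite_mem, prod_const]

theorem piExpect_bernoulliWeight_imp {i j : ι} (hij : i ≠ j) :
    piExpect (fun _ => bernoulliWeight p) (fun f => if f i = true → f j = true then 1 else 0)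
      = p + (1 - p) ^ 2 := by
  have hind (f : ι → Bool) : (if f i = true → f j = true then (1 : ℝ) else 0)
      = 1 - if (∀ k ∈ ({i} : Finset ι), f k = true) ∧ ∀ k ∈ ({j} : Finset ι), f k = false
        then 1 else 0 := by
    cases hi : f i <;> cases hj : f j <;> simp [hi, hj]
  simp only [hind, piExpect_sub, piExpect_const _ (fun _ => sum_bernoulliWeight p),
    piExpect_bernoulliWeight_cylinder p (disjoint_singleton.mpr hij), card_singleton]
  ring

end Bernoulli

section EdgeIndicator

variable {V : Type*}

abbrev PotentialEdge (V : Type*) := {e : Sym2 V // ¬ e.IsDiag}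

def PotentialEdge.ofNe {x y : V} (h : x ≠ y) : PotentialEdge V :=
  ⟨s(x, y), Sym2.mk_isDiag_iff.not.mpr h⟩

open scoped Classical in
noncomputable def edgeIndicatorEquiv : SimpleGraph V ≃ (PotentialEdge V → Bool) where
  toFun G e := decide (e.1 ∈ G.edgeSet)
  invFun f := SimpleGraph.fromEdgeSet {e | ∃ h, f ⟨e, h⟩ = true}
  left_inv G := by
    ext x y
    simp only [SimpleGraph.fromEdgeSet_adj, Set.mem_ofPred_eq, decide_eq_true_eq,
      SimpleGraph.mem_edgeSet, exists_prop]
    exact ⟨fun h => h.1.2, fun h => ⟨⟨h.ne, h⟩, h.ne⟩⟩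
  right_inv f := by
    funext ⟨e, he⟩
    simp [SimpleGraph.edgeSet_fromEdgeSet, he]

theorem mem_edgeSet_edgeIndicatorEquiv_symm (f : PotentialEdge V → Bool) (e : Sym2 V) :
    e ∈ (edgeIndicatorEquiv.symm f).edgeSet ↔ ∃ h, f ⟨e, h⟩ = true := by
  simp +contextual [edgeIndicatorEquiv, SimpleGraph.edgeSet_fromEdgeSet]

theorem adj_edgeIndicatorEquiv_symm (f : PotentialEdge V → Bool) {x y : V} (h : x ≠ y) :
    (edgeIndicatorEquiv.symm f).Adj x y ↔ f (PotentialEdge.ofNe h) = true := by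
  rw [← SimpleGraph.mem_edgeSet, mem_edgeSet_edgeIndicatorEquiv_symm]
  exact ⟨fun ⟨_, hf⟩ => hf, fun hf => ⟨_, hf⟩⟩

theorem dependsOn_comp_edgeIndicatorEquiv_symm {β : Type*} {F : SimpleGraph V → β}
    {C : Set (Sym2 V)}
    (hF : ∀ G G' : SimpleGraph V, (∀ e ∈ C, e ∈ G.edgeSet ↔ e ∈ G'.edgeSet) → F G = F G') :
    DependsOn (fun f => F (edgeIndicatorEquiv.symm f)) (Subtype.val ⁻¹' C) := fun f f' hff =>
  hF _ _ fun e he => by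
    simp only [mem_edgeSet_edgeIndicatorEquiv_symm]
    exact exists_congr fun h => by rw [hff ⟨e, h⟩ he]

variable [Fintype V]

noncomputable def gnpWeight (p : ℝ) (G : SimpleGraph V) : ℝ :=
  p ^ Nat.card G.edgeSet * (1 - p) ^ ((Fintype.card V).choose 2 - Nat.card G.edgeSet)

variable [DecidableEq V]

open scoped Classical in
theorem gnpWeight_eq_prod_bernoulliWeight (p : ℝ) (G : SimpleGraph V) :
    gnpWeight p G = ∏ e, bernoulliWeight p (edgeIndicatorEquiv G e) := by
  have hcard : Nat.card G.edgeSet = #{e : PotentialEdge V | e.1 ∈ G.edgeSet} := by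
    rw [← Fintype.card_subtype, ← Nat.card_eq_fintype_card,
      Nat.card_congr (Equiv.subtypeSubtypeEquivSubtype G.not_isDiag_of_mem_edgeSet)]
  have hcompl : (Fintype.card V).choose 2 - #{e : PotentialEdge V | e.1 ∈ G.edgeSet}
      = #{e : PotentialEdge V | e.1 ∉ G.edgeSet} := by
    rw [← Sym2.card_subtype_not_diag, ← card_univ,
      ← card_filter_add_card_filter_not (s := univ) (fun e : PotentialEdge V => e.1 ∈ G.edgeSet),
      Nat.add_sub_cancel_left]
  simp only [gnpWeight, bernoulliWeight, edgeIndicatorEquiv, Equiv.coe_fn_mk, decide_eq_true_eq,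
    prod_ite, prod_const, hcard, hcompl]

theorem sum_gnpWeight_mul_eq_piExpect (p : ℝ) (F : SimpleGraph V → ℝ) :
    ∑ G, gnpWeight p G * F G
      = piExpect (fun _ => bernoulliWeight p) (fun f => F (edgeIndicatorEquiv.symm f)) := by
  simp only [gnpWeight_eq_prod_bernoulliWeight, piExpect]
  rw [← edgeIndicatorEquiv.symm.sum_comp]
  simp only [Equiv.apply_symm_apply]

end EdgeIndicator

section DominationDiamond

open scoped Classical
open PotentialEdge

variable {V : Type*}

def IsDominationDiamond (G : SimpleGraph V) (a b c d : V) : Prop :=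
  a ≠ b ∧ a ≠ c ∧ a ≠ d ∧ b ≠ c ∧ b ≠ d ∧ c ≠ d ∧
    G.Adj a b ∧ G.Adj b c ∧ G.Adj c d ∧ G.Adj d a ∧ ¬ G.Adj a c ∧ ¬ G.Adj b d ∧
    ∀ e, G.Adj e c → G.Adj e a ∨ e = a

def IsInducedSquare (G : SimpleGraph V) (a b c d : V) : Prop :=
  G.Adj a b ∧ G.Adj b c ∧ G.Adj c d ∧ G.Adj d a ∧ ¬ G.Adj a c ∧ ¬ G.Adj b d

variable {a b c d : V}

theorem dependsOn_isInducedSquare : DependsOn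
    (fun f => if IsInducedSquare (edgeIndicatorEquiv.symm f) a b c d then (1 : ℝ) else 0)
    (Subtype.val ⁻¹' {s(a, b), s(b, c), s(c, d), s(d, a), s(a, c), s(b, d)}) :=
  dependsOn_comp_edgeIndicatorEquiv_symm (F := fun G => if IsInducedSquare G a b c d then 1 else 0)
    fun G G' h => by simp (disch := simp) only [IsInducedSquare, ← SimpleGraph.mem_edgeSet, h]

theorem dependsOn_adj_imp_adj (v x y : V) : DependsOn
    (fun f => if (edgeIndicatorEquiv.symm f).Adj v x → (edgeIndicatorEquiv.symm f).Adj v y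
      then (1 : ℝ) else 0)
    (Subtype.val ⁻¹' {s(v, x), s(v, y)}) :=
  dependsOn_comp_edgeIndicatorEquiv_symm (F := fun G => if G.Adj v x → G.Adj v y then 1 else 0)
    fun G G' h => by simp (disch := simp) only [← SimpleGraph.mem_edgeSet, h]

variable [Fintype V] [DecidableEq V]

theorem isDominationDiamond_iff (G : SimpleGraph V)
    (hab : a ≠ b) (hac : a ≠ c) (had : a ≠ d) (hbc : b ≠ c) (hbd : b ≠ d) (hcd : c ≠ d) :
    IsDominationDiamond G a b c d ↔
      IsInducedSquare G a b c d ∧ ∀ v ∈ ({a, b, c, d} : Finset V)ᶜ, G.Adj v c → G.Adj v a := by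
  unfold IsDominationDiamond IsInducedSquare
  constructor
  · rintro ⟨-, -, -, -, -, -, hab', hbc', hcd', hda', hac', hbd', hdom⟩
    refine ⟨⟨hab', hbc', hcd', hda', hac', hbd'⟩, fun v hv hvc => (hdom v hvc).resolve_right ?_⟩
    rintro rfl
    simp at hv
  · rintro ⟨⟨hab', hbc', hcd', hda', hac', hbd'⟩, hdom⟩
    refine ⟨hab, hac, had, hbc, hbd, hcd, hab', hbc', hcd', hda', hac', hbd', fun v hvc => ?_⟩
    by_cases hv : v ∈ ({a, b, c, d} : Finset V)
    · simp only [mem_insert, mem_singleton] at hv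
      rcases hv with rfl | rfl | rfl | rfl
      · exact Or.inr rfl
      · exact Or.inl hab'.symm
      · exact (G.loopless.irrefl v hvc).elim
      · exact Or.inl hda'
    · exact Or.inl (hdom v (mem_compl.mpr hv) hvc)

variable (p : ℝ)

theorem piExpect_isInducedSquare
    (hab : a ≠ b) (hac : a ≠ c) (had : a ≠ d) (hbc : b ≠ c) (hbd : b ≠ d) (hcd : c ≠ d) :
    piExpect (fun _ => bernoulliWeight p)
        (fun f => if IsInducedSquare (edgeIndicatorEquiv.symm f) a b c d then 1 else 0)
      = p ^ 4 * (1 - p) ^ 2 := by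
  have h₁ : #{ofNe hab, ofNe hbc, ofNe hcd, ofNe had.symm} = 4 := by
    simp [card_insert_of_notMem, ofNe, eq_comm, *]
  have h₀ : #{ofNe hac, ofNe hbd} = 2 := by
    simp [ofNe, eq_comm, *]
  have hdisj : Disjoint ({ofNe hab, ofNe hbc, ofNe hcd, ofNe had.symm} : Finset _)
      {ofNe hac, ofNe hbd} := by
    simp [ofNe, eq_comm, *]
  rw [← h₁, ← h₀, ← piExpect_bernoulliWeight_cylinder p hdisj]
  congr 1
  funext f
  simp only [IsInducedSquare, adj_edgeIndicatorEquiv_symm _ hab, adj_edgeIndicatorEquiv_symm _ hbc,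
    adj_edgeIndicatorEquiv_symm _ hcd, adj_edgeIndicatorEquiv_symm _ had.symm,
    adj_edgeIndicatorEquiv_symm _ hac, adj_edgeIndicatorEquiv_symm _ hbd]
  simp [and_assoc]

theorem piExpect_adj_imp_adj {v x y : V} (hvx : v ≠ x) (hvy : v ≠ y) (hxy : x ≠ y) :
    piExpect (fun _ => bernoulliWeight p) (fun f =>
        if (edgeIndicatorEquiv.symm f).Adj v x → (edgeIndicatorEquiv.symm f).Adj v y then 1 else 0)
      = p + (1 - p) ^ 2 := by
  simp only [adj_edgeIndicatorEquiv_symm _ hvx, adj_edgeIndicatorEquiv_symm _ hvy]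
  exact piExpect_bernoulliWeight_imp p (by grind [ofNe, Sym2.eq_iff])

theorem piExpect_isDominationDiamond
    (hab : a ≠ b) (hac : a ≠ c) (had : a ≠ d) (hbc : b ≠ c) (hbd : b ≠ d) (hcd : c ≠ d) :
    piExpect (fun _ => bernoulliWeight p)
        (fun f => if IsDominationDiamond (edgeIndicatorEquiv.symm f) a b c d then 1 else 0)
      = p ^ 4 * (1 - p) ^ 2 * (p + (1 - p) ^ 2) ^ (Fintype.card V - 4) := by
  have hw (_ : PotentialEdge V) := sum_bernoulliWeight p
  set X : Finset V := {a, b, c, d}ᶜ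
  set C : Set (Sym2 V) := {s(a, b), s(b, c), s(c, d), s(d, a), s(a, c), s(b, d)}
  set N : V → Set (Sym2 V) := fun v => {s(v, c), s(v, a)}
  have hsplit (G : SimpleGraph V) : (if IsDominationDiamond G a b c d then (1 : ℝ) else 0)
      = (if IsInducedSquare G a b c d then 1 else 0)
        * ∏ v ∈ X, if G.Adj v c → G.Adj v a then 1 else 0 := by
    simp only [prod_boole, ite_zero_mul_ite_zero, mul_one,
      isDominationDiamond_iff G hab hac had hbc hbd hcd, X]
  have hNC (v) (hv : v ∈ X) : N v ⊆ Cᶜ := by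
    simp only [X, mem_compl, mem_insert, mem_singleton, not_or] at hv
    simp only [N, C, Set.insert_subset_iff, Set.singleton_subset_iff, Set.mem_compl_iff,
      Set.mem_insert_iff, Set.mem_singleton_iff, Sym2.eq_iff]
    grind
  have hN : (X : Set V).PairwiseDisjoint fun v => (Subtype.val : PotentialEdge V → _) ⁻¹' N v := by
    intro u hu v hv huv
    simp only [X, coe_compl, coe_insert, coe_singleton, Set.mem_compl_iff, Set.mem_insert_iff,
      Set.mem_singleton_iff, not_or] at hu hv
    refine Disjoint.preimage _ ?_
    rw [Set.disjoint_left]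
    simp only [N, Set.mem_insert_iff, Set.mem_singleton_iff]
    rintro e (rfl | rfl) <;> simp only [Sym2.eq_iff] <;> grind
  have hX : #X = Fintype.card V - 4 := by
    simp [X, card_compl, *]
    omega
  simp only [hsplit]
  rw [piExpect_mul_of_dependsOn hw dependsOn_isInducedSquare (DependsOn.finset_prod fun v hv =>
      (dependsOn_adj_imp_adj v c a).mono (by simpa using Set.preimage_mono (hNC v hv))),
    piExpect_prod_of_dependsOn hw X hN fun v _ => dependsOn_adj_imp_adj v c a,
    piExpect_isInducedSquare p hab hac had hbc hbd hcd,
    prod_congr rfl fun v hv => by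
      simp only [X, mem_compl, mem_insert, mem_singleton, not_or] at hv
      exact piExpect_adj_imp_adj p hv.2.2.1 hv.1 hac.symm, prod_const, hX]

theorem card_filter_pairwise_ne_quadruple :
    #{q : V × V × V × V | q.1 ≠ q.2.1 ∧ q.1 ≠ q.2.2.1 ∧ q.1 ≠ q.2.2.2 ∧ q.2.1 ≠ q.2.2.1 ∧
      q.2.1 ≠ q.2.2.2 ∧ q.2.2.1 ≠ q.2.2.2} = (Fintype.card V).descFactorial 4 := by
  rw [← Fintype.card_fin 4, ← Fintype.card_embedding_eq, ← card_univ]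
  refine card_bij' (fun q hq => ⟨![q.1, q.2.1, q.2.2.1, q.2.2.2], fun x y hxy => ?_⟩)
    (fun φ _ => (φ 0, φ 1, φ 2, φ 3)) (fun _ _ => mem_univ _) (fun φ _ => ?_)
    (fun _ _ => rfl) (fun φ _ => ?_)
  · simp only [mem_filter, mem_univ, true_and] at hq
    fin_cases x <;> fin_cases y <;> simp_all
  · simp
  · ext x
    fin_cases x <;> rfl

theorem sum_gnpWeight_mul_card_isDominationDiamond :
    ∑ G, gnpWeight p G * #{q : V × V × V × V | IsDominationDiamond G q.1 q.2.1 q.2.2.1 q.2.2.2}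
      = (Fintype.card V).descFactorial 4
        * (p ^ 4 * (1 - p) ^ 2 * (p + (1 - p) ^ 2) ^ (Fintype.card V - 4)) := by
  simp only [card_filter, Nat.cast_sum, Nat.cast_ite, Nat.cast_one, Nat.cast_zero, mul_sum]
  rw [sum_comm, sum_congr rfl fun q _ => sum_gnpWeight_mul_eq_piExpect p _,
    ← card_filter_pairwise_ne_quadruple, ← nsmul_eq_mul, ← sum_const, sum_filter]
  refine sum_congr rfl fun ⟨a, b, c, d⟩ _ => ?_
  split_ifs with hq
  · obtain ⟨hab, hac, had, hbc, hbd, hcd⟩ := hq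
    exact piExpect_isDominationDiamond p hab hac had hbc hbd hcd
  · have hnot (G : SimpleGraph V) : ¬ IsDominationDiamond G a b c d := fun h =>
      hq ⟨h.1, h.2.1, h.2.2.1, h.2.2.2.1, h.2.2.2.2.1, h.2.2.2.2.2.1⟩
    simp [hnot, piExpect]

end DominationDiamond

theorem Nat.cast_descFactorial_four (n : ℕ) :
    (n.descFactorial 4 : ℝ) = n * (n - 1) * (n - 2) * (n - 3) := by
  rw [← descPochhammer_eval_eq_descFactorial]
  simp [descPochhammer_succ_right]

open scoped Classical in
theorem expected_domination_diamonds_general {n : ℕ} {p : ℝ} :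
    ∑ G : SimpleGraph (Fin n),
        (p ^ (Nat.card G.edgeSet) * (1 - p) ^ (n.choose 2 - Nat.card G.edgeSet)) *
          ((Finset.univ.filter (fun q : Fin n × Fin n × Fin n × Fin n =>
              let a := q.1; let b := q.2.1; let c := q.2.2.1; let d := q.2.2.2
              a ≠ b ∧ a ≠ c ∧ a ≠ d ∧ b ≠ c ∧ b ≠ d ∧ c ≠ d ∧
                G.Adj a b ∧ G.Adj b c ∧ G.Adj c d ∧ G.Adj d a ∧
                ¬ G.Adj a c ∧ ¬ G.Adj b d ∧
                ∀ e, G.Adj e c → G.Adj e a ∨ e = a)).card : ℝ)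
      = n * (n - 1) * (n - 2) * (n - 3) *
          (p ^ 4 * (1 - p) ^ 2 * (p + (1 - p) ^ 2) ^ (n - 4)) := by
  have h := sum_gnpWeight_mul_card_isDominationDiamond (V := Fin n) p
  simp only [gnpWeight, Fintype.card_fin, Nat.cast_descFactorial_four] at h
  convert h using 6
  exact Iff.rfl

open scoped Classical in
/-- In `G(n,p)` with `n ≥ 4`, the expected number of ordered domination diamonds
`(a,b,c,d)` is `n(n-1)(n-2)(n-3) p^4 (1-p)^2 (p+(1-p)^2)^(n-4)`. -/
theorem expected_domination_diamonds {n : ℕ} (hn : 4 ≤ n) {p : ℝ}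
    (hp0 : 0 ≤ p) (hp1 : p ≤ 1) :
    ∑ G : SimpleGraph (Fin n),
        (p ^ (Nat.card G.edgeSet) * (1 - p) ^ (n.choose 2 - Nat.card G.edgeSet)) *
          ((Finset.univ.filter (fun q : Fin n × Fin n × Fin n × Fin n =>
              let a := q.1; let b := q.2.1; let c := q.2.2.1; let d := q.2.2.2
              a ≠ b ∧ a ≠ c ∧ a ≠ d ∧ b ≠ c ∧ b ≠ d ∧ c ≠ d ∧
                G.Adj a b ∧ G.Adj b c ∧ G.Adj c d ∧ G.Adj d a ∧
                ¬ G.Adj a c ∧ ¬ G.Adj b d ∧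
                ∀ e, G.Adj e c → G.Adj e a ∨ e = a)).card : ℝ)
      = n * (n - 1) * (n - 2) * (n - 3) *
          (p ^ 4 * (1 - p) ^ 2 * (p + (1 - p) ^ 2) ^ (n - 4)) :=
  expected_domination_diamonds_general
end

section
/- Let k ≥ 1 be an integer and let F(x,y) = x^{k+1}·(y + (1−y)^{k+1})^{x−k−1}. If p(n) is a sequence of probabilities satisfying 2(log n + ω(n))/n ≤ p(n) ≤ 1 − (k+1)(log n + ω(n))/n for some sequence ω(n) → +∞, then F(n, p(n)) → 0 as n → ∞. -/
/-!
Write `L = log n + ω(n)` and `t = L / n`, so that `2t ≤ p ≤ 1 - (k+1)t`. The base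
`g(p) = p + (1-p)^(k+1)` is convex, hence bounded on this interval by its values at the
endpoints, and both are at most `1 - (k+1)t + O(t²)` (at `p = 2t` this needs `2k ≥ k+1`).
Then `F(n, p) ≤ exp((k+1) log n - (k+1)L + O(1) + O(L²/n)) = exp(-(k+1)ω + O(1) + O(L²/n))`.
Since shrinking `ω` keeps both hypotheses on `p`, we may replace `ω` by `min(ω, log n)`,
which makes `L²/n = O(log² n / n)` vanish.
-/

open Filter Real Set

lemma Filter.Tendsto.min_atTop {α β : Type*} [LinearOrder β] {l : Filter α} {f g : α → β}
    (hf : Tendsto f l atTop) (hg : Tendsto g l atTop) : Tendsto (fun a => min (f a) (g a)) l atTop :=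
  tendsto_atTop.2 fun b =>
    ((hf.eventually_ge_atTop b).and (hg.eventually_ge_atTop b)).mono fun _ h => le_min h.1 h.2

noncomputable def F (k : ℕ) (x y : ℝ) : ℝ := x ^ (k + 1) * (y + (1 - y) ^ (k + 1)) ^ (x - k - 1)

lemma one_sub_pow_le (m : ℕ) {x : ℝ} (hx₀ : 0 ≤ x) (hx₁ : x ≤ 1) :
    (1 - x) ^ m ≤ 1 - m * x + m ^ 2 * x ^ 2 := by
  induction m with
  | zero => simp
  | succ m ih =>
    have hstep := mul_le_mul_of_nonneg_right ih (sub_nonneg.2 hx₁)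
    rw [pow_succ]
    push_cast
    nlinarith [mul_nonneg (mul_nonneg (sq_nonneg (m : ℝ)) hx₀) (sq_nonneg x),
      mul_nonneg (Nat.cast_nonneg (α := ℝ) m) (sq_nonneg x)]

lemma add_one_sub_pow_le_max (m : ℕ) {a b p : ℝ} (hb : b ≤ 1) (hp : p ∈ Icc a b) :
    p + (1 - p) ^ m ≤ max (a + (1 - a) ^ m) (b + (1 - b) ^ m) := by
  have hconv : ConvexOn ℝ (Ici 0) fun q : ℝ => 1 - q + q ^ m := by
    have hfun : (fun q : ℝ => 1 - q + q ^ m) = (fun q : ℝ => q ^ m + 1) - id := by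
      ext q
      simp only [Pi.sub_apply, id]
      ring
    rw [hfun]
    exact ((convexOn_pow m).add_const 1).sub (concaveOn_id (convex_Ici 0))
  have h := hconv.le_max_of_mem_Icc (x := 1 - b) (y := 1 - a) (z := 1 - p)
    (by simp [hb]) (by simp; linarith [hp.1, hp.2]) ⟨by linarith [hp.2], by linarith [hp.1]⟩
  simp only [sub_sub_cancel] at h
  rw [max_comm]
  linarith

lemma add_one_sub_pow_succ_le {k : ℕ} (hk : 1 ≤ k) {t p : ℝ} (ht : 0 ≤ t) (hlow : 2 * t ≤ p)
    (hhigh : p ≤ 1 - (k + 1) * t) :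
    p + (1 - p) ^ (k + 1) ≤ 1 - (k + 1) * t + 4 * (k + 1) ^ 2 * t ^ 2 := by
  have hk' : (1 : ℝ) ≤ k := by exact_mod_cast hk
  refine (add_one_sub_pow_le_max (k + 1) (by nlinarith) ⟨hlow, hhigh⟩).trans (max_le ?_ ?_)
  · have := one_sub_pow_le (k + 1) (x := 2 * t) (by positivity) (by nlinarith)
    push_cast at this
    nlinarith
  · have hkt : (k + 1) * t ≤ 1 := by nlinarith
    have := pow_le_pow_of_le_one (by positivity) hkt (show 2 ≤ k + 1 by omega)
    simp only [sub_sub_cancel, mul_pow] at this ⊢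
    nlinarith [sq_nonneg t, sq_nonneg ((k:ℝ) + 1)]

lemma rpow_le_exp_neg_mul {b s e : ℝ} (hb₀ : 0 ≤ b) (hb : b ≤ 1 - s) (he : 0 ≤ e) :
    b ^ e ≤ exp (-(s * e)) := calc
  b ^ e ≤ exp (-s) ^ e := rpow_le_rpow hb₀ (hb.trans (one_sub_le_exp_neg s)) he
  _ = exp (-(s * e)) := by rw [← exp_mul, neg_mul]

lemma F_nonneg (k : ℕ) {x y : ℝ} (hx : 0 ≤ x) (hy₀ : 0 ≤ y) (hy₁ : y ≤ 1) : 0 ≤ F k x y :=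
  mul_nonneg (by positivity) (rpow_nonneg (add_nonneg hy₀ (pow_nonneg (sub_nonneg.2 hy₁) _)) _)

lemma F_le_exp {k : ℕ} (hk : 1 ≤ k) {x L p : ℝ} (hx : k + 1 ≤ x) (hL : 0 ≤ L)
    (hlow : 2 * L / x ≤ p) (hhigh : p ≤ 1 - (k + 1) * L / x) :
    F k x p ≤ exp ((k + 1) * (log x - L) + (k + 1) ^ 2 + 4 * (k + 1) ^ 2 * (L ^ 2 / x)) := by
  have hx₀ : 0 < x := by linarith
  set t := L / x with ht_def
  have ht₀ : 0 ≤ t := div_nonneg hL hx₀.le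
  have htx : t * x = L := div_mul_cancel₀ L hx₀.ne'
  rw [mul_div_assoc] at hlow hhigh
  have hbase := add_one_sub_pow_succ_le hk ht₀ hlow hhigh
  have ht₁ : t ≤ 1 := by nlinarith
  have ht2x : t ^ 2 * x = L ^ 2 / x := by rw [ht_def]; field_simp
  have hpow : (p + (1 - p) ^ (k + 1)) ^ (x - k - 1) ≤
      exp (-(((k + 1) * t - 4 * (k + 1) ^ 2 * t ^ 2) * (x - k - 1))) :=
    rpow_le_exp_neg_mul (add_nonneg (by linarith) (pow_nonneg (by nlinarith) _)) (by linarith)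
      (by linarith)
  have hxpow : x ^ (k + 1) = exp ((k + 1) * log x) := by
    rw [← exp_log hx₀, ← exp_nat_mul, log_exp]; push_cast; ring_nf
  calc F k x p ≤ x ^ (k + 1) * exp (-(((k + 1) * t - 4 * (k + 1) ^ 2 * t ^ 2) * (x - k - 1))) :=
        mul_le_mul_of_nonneg_left hpow (by positivity)
    _ = exp ((k + 1) * log x - ((k + 1) * t - 4 * (k + 1) ^ 2 * t ^ 2) * (x - k - 1)) := by
        rw [hxpow, ← exp_add]; ring_nf
    _ ≤ _ := by
        gcongr
        rw [← ht2x, ← htx]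
        nlinarith [mul_nonneg (sq_nonneg ((k : ℝ) + 1)) (sq_nonneg t)]

open Filter Real in
/-- For fixed `k ≥ 1` and `F(x,y) = x^(k+1) (y+(1-y)^(k+1))^(x-k-1)`: if `p(n)` is a
sequence of probabilities with
`2(log n + ω(n))/n ≤ p(n) ≤ 1 - (k+1)(log n + ω(n))/n` for some `ω(n) → ∞`,
then `F(n, p(n)) → 0` as `n → ∞`. -/
theorem tendsto_F_zero (k : ℕ) (hk : 1 ≤ k) (p : ℕ → ℝ) (ω : ℕ → ℝ)
    (hp0 : ∀ n, 0 ≤ p n) (hp1 : ∀ n, p n ≤ 1)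
    (hω : Tendsto ω atTop atTop)
    (hlow : ∀ n : ℕ, 2 * (Real.log n + ω n) / n ≤ p n)
    (hhigh : ∀ n : ℕ, p n ≤ 1 - (k + 1) * (Real.log n + ω n) / n) :
    Tendsto (fun n : ℕ =>
        (n : ℝ) ^ (k + 1) * (p n + (1 - p n) ^ (k + 1)) ^ ((n : ℝ) - k - 1))
      atTop (nhds 0) := by
  set ω' : ℕ → ℝ := fun n => min (ω n) (log n)
  have hω' : Tendsto ω' atTop atTop :=
    hω.min_atTop (tendsto_log_atTop.comp tendsto_natCast_atTop_atTop)
  have hlog_sq : Tendsto (fun n : ℕ => log n ^ 2 / n) atTop (nhds 0) := by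
    simpa [Function.comp_def] using
      (tendsto_pow_log_div_mul_add_atTop 1 0 2 one_ne_zero).comp tendsto_natCast_atTop_atTop
  have hbound : ∀ᶠ n : ℕ in atTop, F k n (p n) ≤
      exp (-(k + 1) * ω' n + ((k + 1) ^ 2 + 16 * (k + 1) ^ 2 * (log n ^ 2 / n))) := by
    filter_upwards [eventually_ge_atTop (k + 1), hω'.eventually_ge_atTop 0] with n hn hωn
    have hL : log n + ω' n ≤ log n + ω n := add_le_add_right (min_le_left _ _) _
    have hL_sq : (log n + ω' n) ^ 2 / n ≤ 4 * (log n ^ 2 / n) := by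
      rw [← mul_div_assoc]
      gcongr
      nlinarith [min_le_right (ω n) (log n)]
    refine (F_le_exp hk (L := log n + ω' n) (by exact_mod_cast hn) (by positivity) ?_ ?_).trans ?_
    · exact (div_le_div_of_nonneg_right (by gcongr) n.cast_nonneg).trans (hlow n)
    · exact (hhigh n).trans (by gcongr)
    · rw [exp_le_exp]
      nlinarith
  have hexponent : Tendsto
      (fun n : ℕ => -(k + 1) * ω' n + ((k + 1) ^ 2 + 16 * (k + 1) ^ 2 * (log n ^ 2 / n)))
      atTop atBot := by
    exact (hω'.const_mul_atTop_of_neg (by linarith)).atBot_add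
      ((hlog_sq.const_mul (16 * ((k : ℝ) + 1) ^ 2)).const_add (((k : ℝ) + 1) ^ 2))
  exact squeeze_zero' (Eventually.of_forall fun n => F_nonneg k n.cast_nonneg (hp0 n) (hp1 n))
    hbound (tendsto_exp_atBot.comp hexponent)
end

section
/- For every fixed integer k ≥ 1, the function y ↦ (y + (1−y)^{k+1})^{x−k−1}·x^{k+1} is convex in y on [0,1] for each fixed real x > k+3; more precisely, the second partial derivative of F(x,y) = x^{k+1}(y+(1−y)^{k+1})^{x−k−1} with respect to y is nonnegative for y ∈ [0,1] and x > k+3. -/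
/-!
With `g y = y + (1 - y) ^ (k + 1)` and `p = x - k - 1 > 2`, the chain rule gives
`(g ^ p)'' = p ((p - 1) g ^ (p - 2) g' ^ 2 + g ^ (p - 1) g'')`, and both terms are nonnegative
on `[0, 1]` since there `g ≥ 0` and `g'' = (k + 1) k (1 - y) ^ (k - 1) ≥ 0`. The factor
`x ^ (k + 1)` is positive, and convexity follows from the sign of the second derivative.
-/

section RpowComp

variable {g g' g'' : ℝ → ℝ} {p : ℝ}

theorem deriv_rpow_comp (hg : ∀ y, HasDerivAt g (g' y) y) (hp : 1 ≤ p) :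
    deriv (fun y => g y ^ p) = fun y => g' y * p * g y ^ (p - 1) :=
  funext fun y => ((hg y).rpow_const (Or.inr hp)).deriv

theorem hasDerivAt_deriv_rpow_comp (hg : ∀ y, HasDerivAt g (g' y) y)
    (hg' : ∀ y, HasDerivAt g' (g'' y) y) (hp : 2 ≤ p) (y : ℝ) :
    HasDerivAt (deriv fun y => g y ^ p)
      (p * ((p - 1) * g y ^ (p - 2) * g' y ^ 2 + g y ^ (p - 1) * g'' y)) y := by
  rw [deriv_rpow_comp hg (by linarith)]
  refine (((hg' y).mul_const p).mul
    ((hg y).rpow_const (p := p - 1) (Or.inr (by linarith)))).congr_deriv ?_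
  rw [show p - 1 - 1 = p - 2 by ring]
  ring

theorem iteratedDeriv_two_rpow_comp (hg : ∀ y, HasDerivAt g (g' y) y)
    (hg' : ∀ y, HasDerivAt g' (g'' y) y) (hp : 2 ≤ p) (y : ℝ) :
    iteratedDeriv 2 (fun y => g y ^ p) y =
      p * ((p - 1) * g y ^ (p - 2) * g' y ^ 2 + g y ^ (p - 1) * g'' y) := by
  rw [iteratedDeriv_succ, iteratedDeriv_one]
  exact (hasDerivAt_deriv_rpow_comp hg hg' hp y).deriv

theorem iteratedDeriv_two_rpow_comp_nonneg (hg : ∀ y, HasDerivAt g (g' y) y)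
    (hg' : ∀ y, HasDerivAt g' (g'' y) y) (hp : 2 ≤ p) {y : ℝ} (hgy : 0 ≤ g y)
    (hg''y : 0 ≤ g'' y) : 0 ≤ iteratedDeriv 2 (fun y => g y ^ p) y := by
  rw [iteratedDeriv_two_rpow_comp hg hg' hp]
  have := Real.rpow_nonneg hgy (p - 2)
  have := Real.rpow_nonneg hgy (p - 1)
  have : 0 ≤ p - 1 := by linarith
  positivity

theorem convexOn_rpow_comp (hg : ∀ y, HasDerivAt g (g' y) y)
    (hg' : ∀ y, HasDerivAt g' (g'' y) y) (hp : 2 ≤ p) {s : Set ℝ} (hs : Convex ℝ s)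
    (hgs : ∀ y ∈ s, 0 ≤ g y) (hg''s : ∀ y ∈ s, 0 ≤ g'' y) :
    ConvexOn ℝ s fun y => g y ^ p := by
  refine convexOn_of_deriv2_nonneg' hs
    (fun y _ => ((hg y).rpow_const (Or.inr (by linarith))).differentiableAt.differentiableWithinAt)
    (fun y _ => (hasDerivAt_deriv_rpow_comp hg hg' hp y).differentiableAt.differentiableWithinAt)
    fun y hy => ?_
  rw [← iteratedDeriv_eq_iterate]
  exact iteratedDeriv_two_rpow_comp_nonneg hg hg' hp (hgs y hy) (hg''s y hy)

end RpowComp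

theorem hasDerivAt_add_one_sub_pow_succ (k : ℕ) (y : ℝ) :
    HasDerivAt (fun y : ℝ => y + (1 - y) ^ (k + 1)) (1 - ((k : ℝ) + 1) * (1 - y) ^ k) y := by
  refine ((hasDerivAt_id' y).add (((hasDerivAt_id' y).const_sub 1).pow (k + 1))).congr_deriv ?_
  push_cast
  ring

theorem hasDerivAt_one_sub_mul_one_sub_pow (k : ℕ) (y : ℝ) :
    HasDerivAt (fun y : ℝ => 1 - ((k : ℝ) + 1) * (1 - y) ^ k)
      (((k : ℝ) + 1) * k * (1 - y) ^ (k - 1)) y := by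
  refine ((((hasDerivAt_id' y).const_sub 1).pow k).const_mul ((k : ℝ) + 1)).const_sub 1
    |>.congr_deriv ?_
  ring

theorem F_convex_in_y_general (k : ℕ) (x : ℝ) (hx : (k : ℝ) + 3 < x) :
    ConvexOn ℝ (Set.Icc (0 : ℝ) 1)
      (fun y : ℝ => x ^ (k + 1) * (y + (1 - y) ^ (k + 1)) ^ (x - (k : ℝ) - 1)) ∧
    ∀ y ∈ Set.Icc (0 : ℝ) 1,
      0 ≤ iteratedDeriv 2
        (fun y : ℝ => x ^ (k + 1) * (y + (1 - y) ^ (k + 1)) ^ (x - (k : ℝ) - 1)) y := by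
  have hp : 2 ≤ x - k - 1 := by linarith
  have hc : 0 ≤ x ^ (k + 1) := pow_nonneg (by linarith [k.cast_nonneg (α := ℝ)]) _
  have hg := hasDerivAt_add_one_sub_pow_succ k
  have hg' := hasDerivAt_one_sub_mul_one_sub_pow k
  have hg_nonneg : ∀ y ∈ Set.Icc (0 : ℝ) 1, 0 ≤ y + (1 - y) ^ (k + 1) := fun y ⟨hy0, hy1⟩ => by
    have : 0 ≤ 1 - y := by linarith
    positivity
  have hg''_nonneg : ∀ y ∈ Set.Icc (0 : ℝ) 1, 0 ≤ ((k : ℝ) + 1) * k * (1 - y) ^ (k - 1) :=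
    fun y ⟨_, hy1⟩ => by
      have : 0 ≤ 1 - y := by linarith
      positivity
  refine ⟨(convexOn_rpow_comp hg hg' hp (convex_Icc 0 1) hg_nonneg hg''_nonneg).smul hc,
    fun y hy => ?_⟩
  rw [iteratedDeriv_const_mul_field]
  exact mul_nonneg hc
    (iteratedDeriv_two_rpow_comp_nonneg hg hg' hp (hg_nonneg y hy) (hg''_nonneg y hy))

/-- For fixed integer `k ≥ 1` and fixed real `x > k+3`, the function
`y ↦ x^(k+1) (y+(1-y)^(k+1))^(x-k-1)` is convex on `[0,1]`; more precisely, its second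
derivative in `y` is nonnegative for `y ∈ [0,1]`. -/
theorem F_convex_in_y (k : ℕ) (hk : 1 ≤ k) (x : ℝ) (hx : (k : ℝ) + 3 < x) :
    ConvexOn ℝ (Set.Icc (0 : ℝ) 1)
      (fun y : ℝ => x ^ (k + 1) * (y + (1 - y) ^ (k + 1)) ^ (x - (k : ℝ) - 1)) ∧
    ∀ y ∈ Set.Icc (0 : ℝ) 1,
      0 ≤ iteratedDeriv 2
        (fun y : ℝ => x ^ (k + 1) * (y + (1 - y) ^ (k + 1)) ^ (x - (k : ℝ) - 1)) y :=
  F_convex_in_y_general k x hx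
end

section
/- In the Erdős–Rényi random graph G(n,p), for a fixed vertex a and a fixed k-element set S of vertices not containing a, the probability that (a,S) is a proper star k-separation equals (1−p)^k · [(p+(1−p)^{k+1})^{n−k−1} + (1 − p^{n−k−1})(1 − (1−p)^{k(n−k−1)}) − 1]. -/
/-!
Let `T` be the set of vertices outside `{a} ∪ S` and condition on the set `U` of neighbours of `a`
in `T`. Given `U`, the pair `(a, S)` is a proper star separation iff `U ≠ T`, the edges `a–U` are
present, the edges `a–S` and `({a} ∪ S)–(T \ U)` are absent, and not all edges `S–U` are absent.
By independence of the edges this has probability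
`p ^ u * (1 - p) ^ (k + (k + 1) * (t - u)) * (1 - (1 - p) ^ (k * u))`, and summing over `U ⊊ T`
with the binomial theorem gives the formula.
-/

open Finset

theorem Finset.filter_eq_iff_of_subset {α : Type*} [DecidableEq α] {s U : Finset α}
    {P : α → Prop} [DecidablePred P] (hU : U ⊆ s) :
    {x ∈ s | P x} = U ↔ (∀ x ∈ U, P x) ∧ ∀ x ∈ s \ U, ¬ P x := by
  constructor
  · rintro rfl
    simp +contextual
  · rintro ⟨hUP, hsUP⟩
    ext x
    by_cases hx : x ∈ U
    · simp [hx, hU hx, hUP x hx]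
    · simpa [hx] using hsUP x

theorem sum_prod_bernoulli_forced {ι : Type*} [Fintype ι] [DecidableEq ι] (p : ℝ)
    {O Z : Finset ι} (hOZ : Disjoint O Z) :
    ∑ f : ι → Bool, (if (∀ i ∈ O, f i = true) ∧ ∀ i ∈ Z, f i = false then
      ∏ i, (if f i then p else 1 - p) else 0) = p ^ #O * (1 - p) ^ #Z := by
  set g : ι → Bool → ℝ := fun i b =>
    if (i ∈ O → b = true) ∧ (i ∈ Z → b = false) then (if b then p else 1 - p) else 0
  have hfactor : ∀ f : ι → Bool,
      (if (∀ i ∈ O, f i = true) ∧ ∀ i ∈ Z, f i = false then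
        ∏ i, (if f i then p else 1 - p) else 0) = ∏ i, g i (f i) := by
    intro f
    simp only [g, Fintype.prod_ite_zero, forall_and]
  have hmarginal : ∀ i, ∑ b, g i b = (if i ∈ O then p else 1) * (if i ∈ Z then 1 - p else 1) := by
    intro i
    by_cases hO : i ∈ O
    · simp [g, hO, disjoint_left.1 hOZ hO]
    · by_cases hZ : i ∈ Z
      · simp [g, hO, hZ]
      · simp [g, hO, hZ]
  simp only [hfactor, ← Fintype.prod_sum, hmarginal, prod_mul_distrib, Fintype.prod_ite_mem,
    prod_const]

section PairsBetween
variable {V : Type*} [DecidableEq V]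

def pairsBetween (A B : Finset V) : Finset (Sym2 V) := (A ×ˢ B).image fun q => s(q.1, q.2)

variable {A B A' B' : Finset V}

theorem mem_pairsBetween {e : Sym2 V} :
    e ∈ pairsBetween A B ↔ ∃ x ∈ A, ∃ y ∈ B, s(x, y) = e := by
  simp [pairsBetween, and_assoc]

theorem forall_mem_pairsBetween {P : Sym2 V → Prop} :
    (∀ e ∈ pairsBetween A B, P e) ↔ ∀ x ∈ A, ∀ y ∈ B, P s(x, y) := by
  simp only [mem_pairsBetween]
  exact ⟨fun h x hx y hy => h _ ⟨x, hx, y, hy, rfl⟩, fun h e ⟨x, hx, y, hy, he⟩ => he ▸ h x hx y hy⟩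

theorem not_isDiag_of_mem_pairsBetween (h : Disjoint A B) : ∀ e ∈ pairsBetween A B, ¬ e.IsDiag :=
  forall_mem_pairsBetween.2 fun _ hx _ hy hxy =>
    disjoint_left.1 h hx (Sym2.mk_isDiag_iff.1 hxy ▸ hy)

theorem card_pairsBetween (h : Disjoint A B) : #(pairsBetween A B) = #A * #B := by
  rw [pairsBetween, card_image_of_injOn, card_product]
  rintro ⟨x, y⟩ hxy ⟨x', y'⟩ hxy' heq
  simp only [coe_product, Set.mem_prod, mem_coe] at hxy hxy'
  rcases Sym2.eq_iff.1 heq with ⟨rfl, rfl⟩ | ⟨rfl, -⟩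
  · rfl
  · exact absurd hxy'.2 (disjoint_left.1 h hxy.1)

theorem disjoint_pairsBetween (h₁ : Disjoint A A' ∨ Disjoint B B')
    (h₂ : Disjoint A B' ∨ Disjoint B A') :
    Disjoint (pairsBetween A B) (pairsBetween A' B') := by
  rw [disjoint_left, forall_mem_pairsBetween]
  intro x hx y hy hxy
  obtain ⟨x', hx', y', hy', heq⟩ := mem_pairsBetween.1 hxy
  rcases Sym2.eq_iff.1 heq with ⟨rfl, rfl⟩ | ⟨rfl, rfl⟩
  · rcases h₁ with h | h
    · exact disjoint_left.1 h hx hx'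
    · exact disjoint_left.1 h hy hy'
  · rcases h₂ with h | h
    · exact disjoint_left.1 h hx hy'
    · exact disjoint_left.1 h hy hx'

end PairsBetween

namespace SimpleGraph
variable {V : Type*}

noncomputable def edgeIndicator (G : SimpleGraph V) : {e : Sym2 V // ¬ e.IsDiag} → Bool :=
  open scoped Classical in fun e => decide (e.1 ∈ G.edgeSet)

theorem edgeIndicator_bijective : Function.Bijective (edgeIndicator (V := V)) := by
  classical
  refine ⟨fun G H h => edgeSet_inj.1 (Set.ext fun e => ?_), fun f => ?_⟩
  · by_cases he : e.IsDiag
    · exact iff_of_false (fun h' => G.not_isDiag_of_mem_edgeSet h' he)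
        (fun h' => H.not_isDiag_of_mem_edgeSet h' he)
    · simpa [edgeIndicator] using congrFun h ⟨e, he⟩
  · refine ⟨fromEdgeSet {e | ∃ he, f ⟨e, he⟩}, funext fun e => ?_⟩
    simp [edgeIndicator, edgeSet_fromEdgeSet, e.2]

def HasEdgesAndNonEdges (G : SimpleGraph V) (O Z : Finset (Sym2 V)) : Prop :=
  (∀ e ∈ O, e ∈ G.edgeSet) ∧ ∀ e ∈ Z, e ∉ G.edgeSet

/-- The clauses say: `a` has no neighbour in `S`; `S` is a union of components of `G - st(a)`;
`st(a) ∪ S ≠ V`; some edge leaves `S`, so `S` does not separate `G`. -/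
def IsProperStarSeparation (G : SimpleGraph V) (a : V) (S : Finset V) : Prop :=
  (∀ b ∈ S, ¬ G.Adj a b) ∧
  (∀ b ∈ S, ∀ c, c ≠ a → ¬ G.Adj a c → c ∉ S → ¬ G.Adj b c) ∧
  (∃ c, c ∉ S ∧ c ≠ a ∧ ¬ G.Adj a c) ∧
  (∃ b ∈ S, ∃ c, c ∉ S ∧ G.Adj b c)

variable [DecidableEq V] [Fintype V]

theorem filter_adj_eq_and_isProperStarSeparation_iff {G : SimpleGraph V} [DecidableRel G.Adj]
    {a : V} {S T U : Finset V} (hT : T = (insert a S)ᶜ) (hU : U ⊆ T) :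
    ({c ∈ T | G.Adj a c} = U ∧ G.IsProperStarSeparation a S) ↔
      U ≠ T ∧
      ((∀ c ∈ U, G.Adj a c) ∧ (∀ c ∈ S, ¬ G.Adj a c) ∧
        ∀ b ∈ insert a S, ∀ c ∈ T \ U, ¬ G.Adj b c) ∧
      ∃ b ∈ S, ∃ c ∈ U, G.Adj b c := by
  have hmem : ∀ c, c ∈ T ↔ c ≠ a ∧ c ∉ S := by simp [hT]
  rw [filter_eq_iff_of_subset hU]
  constructor
  · rintro ⟨⟨hUadj, hnadj⟩, haS, hsep, ⟨c, hcS, hca, hac⟩, b, hb, d, hdS, hbd⟩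
    have hST : ∀ b ∈ S, ∀ c ∈ T \ U, ¬ G.Adj b c := fun b hb c hc =>
      hsep b hb c ((hmem c).1 (mem_sdiff.1 hc).1).1 (hnadj c hc) ((hmem c).1 (mem_sdiff.1 hc).1).2
    refine ⟨?_, ⟨hUadj, haS, (forall_mem_insert _ _ _).2 ⟨hnadj, hST⟩⟩, b, hb, d, ?_, hbd⟩
    · rintro rfl
      exact hac (hUadj c ((hmem c).2 ⟨hca, hcS⟩))
    · by_contra hdU
      have hda : d ≠ a := by
        rintro rfl
        exact haS b hb hbd.symm
      exact hST b hb d (mem_sdiff.2 ⟨(hmem d).2 ⟨hda, hdS⟩, hdU⟩) hbd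
  · rintro ⟨hUT, ⟨hUadj, haS, hnadj⟩, b, hb, c, hcU, hbc⟩
    obtain ⟨hnadj, hST⟩ := (forall_mem_insert _ _ _).1 hnadj
    obtain ⟨d, hdT, hdU⟩ := exists_of_ssubset (ssubset_of_subset_of_ne hU hUT)
    refine ⟨⟨hUadj, hnadj⟩, haS, fun b hb d hda had hdS => ?_,
      ⟨d, ((hmem d).1 hdT).2, ((hmem d).1 hdT).1, hnadj d (mem_sdiff.2 ⟨hdT, hdU⟩)⟩,
      b, hb, c, ((hmem c).1 (hU hcU)).2, hbc⟩
    exact hST b hb d (mem_sdiff.2 ⟨(hmem d).2 ⟨hda, hdS⟩, fun hdU => had (hUadj d hdU)⟩)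

theorem filter_adj_eq_and_isProperStarSeparation_iff_hasEdgesAndNonEdges {G : SimpleGraph V}
    [DecidableRel G.Adj] {a : V} {S T U : Finset V} (hT : T = (insert a S)ᶜ) (hU : U ⊆ T) :
    ({c ∈ T | G.Adj a c} = U ∧ G.IsProperStarSeparation a S) ↔
      U ≠ T ∧
      (G.HasEdgesAndNonEdges (pairsBetween {a} U)
          (pairsBetween {a} S ∪ pairsBetween (insert a S) (T \ U)) ∧
        ¬ G.HasEdgesAndNonEdges (pairsBetween {a} U)
          (pairsBetween {a} S ∪ pairsBetween (insert a S) (T \ U) ∪ pairsBetween S U)) := by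
  rw [filter_adj_eq_and_isProperStarSeparation_iff hT hU]
  simp only [HasEdgesAndNonEdges, forall_mem_union, forall_mem_pairsBetween, mem_singleton,
    forall_eq, mem_edgeSet]
  refine and_congr_right fun _ => and_congr_right fun hpattern => ?_
  rw [← and_assoc, and_iff_right hpattern]
  simp only [not_forall, not_not, exists_prop]

noncomputable def gnpWeight (p : ℝ) (G : SimpleGraph V) : ℝ :=
  ∏ e, if G.edgeIndicator e then p else 1 - p

theorem gnpWeight_eq (p : ℝ) (G : SimpleGraph V) :
    gnpWeight p G =
      p ^ Nat.card G.edgeSet * (1 - p) ^ ((Fintype.card V).choose 2 - Nat.card G.edgeSet) := by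
  classical
  have hcard : #{e | G.edgeIndicator e} = Nat.card G.edgeSet := by
    rw [← Fintype.card_subtype, ← Nat.card_eq_fintype_card]
    simp only [edgeIndicator, decide_eq_true_eq]
    exact Nat.card_congr ((Equiv.subtypeSubtypeEquivSubtypeInter _ _).trans
      (Equiv.subtypeEquivRight fun _ => and_iff_right_of_imp G.not_isDiag_of_mem_edgeSet))
  have hcompl := card_filter_add_card_filter_not (s := (univ : Finset {e : Sym2 V // ¬ e.IsDiag}))
    (fun e => G.edgeIndicator e)
  rw [card_univ, Sym2.card_subtype_not_diag, hcard] at hcompl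
  rw [gnpWeight, prod_ite, prod_const, prod_const, hcard, ← hcompl, Nat.add_sub_cancel_left]

open scoped Classical in
theorem sum_gnpWeight_hasEdgesAndNonEdges (p : ℝ) {O Z : Finset (Sym2 V)}
    (hO : ∀ e ∈ O, ¬ e.IsDiag) (hZ : ∀ e ∈ Z, ¬ e.IsDiag) (hOZ : Disjoint O Z) :
    ∑ G : SimpleGraph V, (if G.HasEdgesAndNonEdges O Z then gnpWeight p G else 0) =
      p ^ #O * (1 - p) ^ #Z := by
  set O' := O.subtype fun e => ¬ e.IsDiag
  set Z' := Z.subtype fun e => ¬ e.IsDiag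
  have hOZ' : Disjoint O' Z' := Finset.disjoint_left.2 fun e he he' =>
    Finset.disjoint_left.1 hOZ (mem_subtype.1 he) (mem_subtype.1 he')
  have hcardO : #O' = #O := by rw [card_subtype, filter_true_of_mem hO]
  have hcardZ : #Z' = #Z := by rw [card_subtype, filter_true_of_mem hZ]
  rw [← hcardO, ← hcardZ, ← sum_prod_bernoulli_forced p hOZ']
  refine Fintype.sum_bijective _ edgeIndicator_bijective _ _ fun G => if_congr ?_ rfl rfl
  simp only [HasEdgesAndNonEdges, O', Z', mem_subtype, edgeIndicator, decide_eq_true_eq,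
    decide_eq_false_iff_not, Subtype.forall]
  exact ⟨fun ⟨h1, h2⟩ => ⟨fun e _ he => h1 e he, fun e _ he => h2 e he⟩,
    fun ⟨h1, h2⟩ => ⟨fun e he => h1 e (hO e he) he, fun e he => h2 e (hZ e he) he⟩⟩

open scoped Classical in
theorem sum_gnpWeight_hasEdgesAndNonEdges_and_not (p : ℝ) {O Z W : Finset (Sym2 V)}
    (hO : ∀ e ∈ O, ¬ e.IsDiag) (hZ : ∀ e ∈ Z, ¬ e.IsDiag) (hW : ∀ e ∈ W, ¬ e.IsDiag)
    (hOZ : Disjoint O Z) (hOW : Disjoint O W) (hZW : Disjoint Z W) :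
    ∑ G : SimpleGraph V,
      (if G.HasEdgesAndNonEdges O Z ∧ ¬ G.HasEdgesAndNonEdges O (Z ∪ W) then gnpWeight p G
        else 0) =
      p ^ #O * (1 - p) ^ #Z - p ^ #O * (1 - p) ^ (#Z + #W) := by
  have hsplit : ∀ G : SimpleGraph V,
      (if G.HasEdgesAndNonEdges O Z ∧ ¬ G.HasEdgesAndNonEdges O (Z ∪ W) then gnpWeight p G
        else 0) =
      (if G.HasEdgesAndNonEdges O Z then gnpWeight p G else 0) -
        (if G.HasEdgesAndNonEdges O (Z ∪ W) then gnpWeight p G else 0) := by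
    intro G
    by_cases hZW : G.HasEdgesAndNonEdges O (Z ∪ W)
    · have hZ : G.HasEdgesAndNonEdges O Z :=
        ⟨hZW.1, fun e he => hZW.2 e (mem_union_left _ he)⟩
      simp [hZ, hZW]
    · by_cases hZ : G.HasEdgesAndNonEdges O Z <;> simp [hZ, hZW]
  rw [sum_congr rfl fun G _ => hsplit G, sum_sub_distrib,
    sum_gnpWeight_hasEdgesAndNonEdges p hO hZ hOZ,
    sum_gnpWeight_hasEdgesAndNonEdges p hO (forall_mem_union.2 ⟨hZ, hW⟩)
      (disjoint_union_right.2 ⟨hOZ, hOW⟩),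
    card_union_of_disjoint hZW]

open scoped Classical in
theorem sum_gnpWeight_filter_adj_eq_and_isProperStarSeparation (p : ℝ) {a : V}
    {S T U : Finset V} (haS : a ∉ S) (hT : T = (insert a S)ᶜ) (hU : U ⊆ T) :
    ∑ G : SimpleGraph V,
      (if {c ∈ T | G.Adj a c} = U ∧ G.IsProperStarSeparation a S then gnpWeight p G else 0) =
      if U = T then 0 else
        p ^ #U * (1 - p) ^ (#S + (#S + 1) * (#T - #U)) -
          p ^ #U * (1 - p) ^ (#S + (#S + 1) * (#T - #U) + #S * #U) := by
  have hstT : Disjoint (insert a S) T := hT ▸ disjoint_compl_right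
  have hstU : Disjoint (insert a S) U := hstT.mono_right hU
  have hstTU : Disjoint (insert a S) (T \ U) := hstT.mono_right sdiff_subset
  have haS' : Disjoint {a} S := disjoint_singleton_left.2 haS
  have haU : Disjoint {a} U := disjoint_singleton_left.2 (disjoint_insert_left.1 hstU).1
  have haTU : Disjoint {a} (T \ U) := disjoint_singleton_left.2 (disjoint_insert_left.1 hstTU).1
  have hSU : Disjoint S U := (disjoint_insert_left.1 hstU).2
  have hSTU : Disjoint S (T \ U) := (disjoint_insert_left.1 hstTU).2
  set O := pairsBetween {a} U
  set Z := pairsBetween {a} S ∪ pairsBetween (insert a S) (T \ U)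
  set W := pairsBetween S U
  have hZ : ∀ e ∈ Z, ¬ e.IsDiag := forall_mem_union.2
    ⟨not_isDiag_of_mem_pairsBetween haS', not_isDiag_of_mem_pairsBetween hstTU⟩
  have hOZ : Disjoint O Z := disjoint_union_right.2
    ⟨disjoint_pairsBetween (.inr hSU.symm) (.inl haS'),
      disjoint_pairsBetween (.inr disjoint_sdiff) (.inl haTU)⟩
  have hZW : Disjoint Z W := disjoint_union_left.2
    ⟨disjoint_pairsBetween (.inl haS') (.inl haU),
      disjoint_pairsBetween (.inr sdiff_disjoint) (.inl hstU)⟩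
  have hcardZ : #Z = #S + (#S + 1) * (#T - #U) := by
    rw [card_union_of_disjoint (disjoint_pairsBetween (.inr hSTU) (.inl haTU)),
      card_pairsBetween haS', card_pairsBetween hstTU, card_singleton, one_mul,
      card_insert_of_notMem haS, card_sdiff_of_subset hU]
  have hevent := fun G : SimpleGraph V =>
    filter_adj_eq_and_isProperStarSeparation_iff_hasEdgesAndNonEdges (G := G) hT hU
  split_ifs with hUT
  · exact sum_eq_zero fun G _ => if_neg fun h => ((hevent G).1 h).1 hUT
  · simp only [hevent, hUT, ne_eq, not_false_eq_true, true_and]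
    rw [sum_gnpWeight_hasEdgesAndNonEdges_and_not p (not_isDiag_of_mem_pairsBetween haU) hZ
        (not_isDiag_of_mem_pairsBetween hSU) hOZ
        (disjoint_pairsBetween (.inl haS') (.inl haU)) hZW,
      hcardZ, card_pairsBetween haU, card_pairsBetween hSU,
      card_singleton, one_mul]

end SimpleGraph

theorem sum_powerset_ne_self_star_weights {α : Type*} [DecidableEq α] (p : ℝ) (k : ℕ)
    (T : Finset α) :
    ∑ U ∈ T.powerset, (if U = T then 0 else
      p ^ #U * (1 - p) ^ (k + (k + 1) * (#T - #U)) -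
        p ^ #U * (1 - p) ^ (k + (k + 1) * (#T - #U) + k * #U)) =
      (1 - p) ^ k *
        ((p + (1 - p) ^ (k + 1)) ^ #T + (1 - p ^ #T) * (1 - (1 - p) ^ (k * #T)) - 1) := by
  set q := 1 - p
  set X : Finset α → ℝ := fun U => q ^ k * (p ^ #U * (q ^ (k + 1)) ^ (#T - #U)) -
    q ^ k * q ^ (k * #T) * (p ^ #U * q ^ (#T - #U))
  have hX : ∀ U ∈ T.powerset, (if U = T then 0 else
      p ^ #U * q ^ (k + (k + 1) * (#T - #U)) - p ^ #U * q ^ (k + (k + 1) * (#T - #U) + k * #U)) =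
      X U - if U = T then X U else 0 := by
    intro U hU
    split_ifs
    · simp
    · have hexp : k + (k + 1) * (#T - #U) + k * #U = k + k * #T + (#T - #U) := by
        have := card_le_card (mem_powerset.1 hU)
        rw [show k * #T = k * (#T - #U) + k * #U by rw [← mul_add, Nat.sub_add_cancel this]]
        ring
      simp only [X, hexp, pow_add, pow_mul]
      ring
  rw [sum_congr rfl hX, sum_sub_distrib, sum_ite_eq', if_pos (mem_powerset_self T),
    sum_sub_distrib, ← mul_sum, ← mul_sum, sum_pow_mul_eq_add_pow, sum_pow_mul_eq_add_pow]
  simp only [X, q, Nat.sub_self, pow_zero, mul_one, add_sub_cancel, one_pow]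
  ring

open scoped Classical in
theorem prob_proper_star_separation_general {n k : ℕ} {p : ℝ}
    (a : Fin n) (S : Finset (Fin n)) (haS : a ∉ S) (hcard : S.card = k) :
    ∑ G : SimpleGraph (Fin n),
        (if ((∀ b ∈ S, ¬ G.Adj a b) ∧
              (∀ b ∈ S, ∀ c, c ≠ a → ¬ G.Adj a c → c ∉ S → ¬ G.Adj b c) ∧
              (∃ c, c ∉ S ∧ c ≠ a ∧ ¬ G.Adj a c) ∧
              (∃ b ∈ S, ∃ c, c ∉ S ∧ G.Adj b c)) then
          p ^ (Nat.card G.edgeSet) * (1 - p) ^ (n.choose 2 - Nat.card G.edgeSet)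
        else 0)
      = (1 - p) ^ k *
          ((p + (1 - p) ^ (k + 1)) ^ (n - k - 1) +
            (1 - p ^ (n - k - 1)) * (1 - (1 - p) ^ (k * (n - k - 1))) - 1) := by
  set T : Finset (Fin n) := (insert a S)ᶜ with hT
  have hcardT : #T = n - k - 1 := by
    rw [hT, card_compl, card_insert_of_notMem haS, hcard, Fintype.card_fin, Nat.sub_add_eq]
  calc _ = ∑ G : SimpleGraph (Fin n),
        if G.IsProperStarSeparation a S then G.gnpWeight p else 0 :=
        sum_congr rfl fun G _ => by
          rw [SimpleGraph.gnpWeight_eq, Fintype.card_fin]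
          exact if_congr Iff.rfl rfl rfl
    _ = ∑ U ∈ T.powerset, ∑ G : SimpleGraph (Fin n),
        if {c ∈ T | G.Adj a c} = U ∧ G.IsProperStarSeparation a S then G.gnpWeight p else 0 := by
        rw [← sum_fiberwise_of_maps_to fun G _ => mem_powerset.2 (filter_subset (G.Adj a) T)]
        simp only [sum_filter, ite_and]
    _ = _ := by
        rw [sum_congr rfl fun U hU =>
            SimpleGraph.sum_gnpWeight_filter_adj_eq_and_isProperStarSeparation p haS hT
              (mem_powerset.1 hU),
          sum_powerset_ne_self_star_weights, hcard, hcardT]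

open scoped Classical in
/-- In `G(n,p)`, for a fixed vertex `a` and a fixed `k`-element set `S` of vertices not
containing `a` (with `1 ≤ k ≤ n-2`), the probability that `(a,S)` is a proper star
`k`-separation equals
`(1-p)^k * ((p+(1-p)^(k+1))^(n-k-1) + (1-p^(n-k-1))(1-(1-p)^(k(n-k-1))) - 1)`. -/
theorem prob_proper_star_separation {n k : ℕ} (hk : 1 ≤ k) (hkn : k ≤ n - 2)
    {p : ℝ} (hp0 : 0 ≤ p) (hp1 : p ≤ 1)
    (a : Fin n) (S : Finset (Fin n)) (haS : a ∉ S) (hcard : S.card = k) :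
    ∑ G : SimpleGraph (Fin n),
        (if ((∀ b ∈ S, ¬ G.Adj a b) ∧
              (∀ b ∈ S, ∀ c, c ≠ a → ¬ G.Adj a c → c ∉ S → ¬ G.Adj b c) ∧
              (∃ c, c ∉ S ∧ c ≠ a ∧ ¬ G.Adj a c) ∧
              (∃ b ∈ S, ∃ c, c ∉ S ∧ G.Adj b c)) then
          p ^ (Nat.card G.edgeSet) * (1 - p) ^ (n.choose 2 - Nat.card G.edgeSet)
        else 0)
      = (1 - p) ^ k *
          ((p + (1 - p) ^ (k + 1)) ^ (n - k - 1) +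
            (1 - p ^ (n - k - 1)) * (1 - (1 - p) ^ (k * (n - k - 1))) - 1) :=
  prob_proper_star_separation_general a S haS hcard
end

section
/- If a finite simple graph Γ is star 2-connected (has no star-cut-vertices), then either Γ is connected or Γ is the disjoint union of exactly two complete graphs. -/
/-!
Take a vertex `x` and a vertex `y` not reachable from it. Then `y ∉ st(x)`, and since the
complement of `st(x)` induces a connected graph, every vertex outside `st(x)` is reachable from
`y`, hence not from `x`. So the component of `x` lies inside `st(x)`: whenever some vertex is
unreachable from `x`, the component of `x` is a clique. If `Γ` is disconnected, fix a component
`C ∋ a`; it is a clique, and its complement lies outside `st(a)`, so it is connected as well and,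
missing `a`, is a clique too.
-/

namespace SimpleGraph

variable {V : Type*} {G : SimpleGraph V}

def star (G : SimpleGraph V) (a : V) : Set V := insert a (G.neighborSet a)

lemma notMem_star_of_not_reachable {a v : V} (h : ¬ G.Reachable a v) : v ∉ G.star a := by
  rintro (rfl | hadj)
  exacts [h .rfl, h hadj.reachable]

lemma reachable_of_preconnected_induce {s : Set V} (hs : (G.induce s).Preconnected) {u v : V}
    (hu : u ∈ s) (hv : v ∈ s) : G.Reachable u v :=
  (hs ⟨u, hu⟩ ⟨v, hv⟩).map (Embedding.induce s).toHom

section StarPreconnected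

variable (hstar : ∀ a, (G.induce (G.star a)ᶜ).Preconnected)
include hstar

lemma adj_of_reachable_of_not_reachable {x y v : V} (hxy : ¬ G.Reachable x y)
    (hxv : G.Reachable x v) (hne : x ≠ v) : G.Adj x v := by
  by_contra hadj
  have hv : v ∉ G.star x := by
    rintro (rfl | h)
    exacts [hne rfl, hadj h]
  exact hxy <| hxv.trans <|
    reachable_of_preconnected_induce (hstar x) hv (notMem_star_of_not_reachable hxy)

lemma reachable_of_not_reachable_of_not_reachable {a x y : V} (hx : ¬ G.Reachable a x)
    (hy : ¬ G.Reachable a y) : G.Reachable x y :=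
  reachable_of_preconnected_induce (hstar a)
    (notMem_star_of_not_reachable hx) (notMem_star_of_not_reachable hy)

end StarPreconnected

end SimpleGraph

theorem star_two_connected_structure_general {V : Type*} [Nonempty V]
    (G : SimpleGraph V)
    (hstar : ∀ a : V, (G.induce {v : V | ¬ (v = a ∨ G.Adj a v)}).Preconnected) :
    G.Connected ∨
      ∃ A B : Set V, A ∪ B = Set.univ ∧ A ∩ B = ∅ ∧ A.Nonempty ∧ B.Nonempty ∧
        (∀ x ∈ A, ∀ y ∈ A, x ≠ y → G.Adj x y) ∧
        (∀ x ∈ B, ∀ y ∈ B, x ≠ y → G.Adj x y) ∧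
        (∀ x ∈ A, ∀ y ∈ B, ¬ G.Adj x y) := by
  replace hstar : ∀ a, (G.induce (G.star a)ᶜ).Preconnected := hstar
  by_cases hpre : G.Preconnected
  · exact .inl ⟨hpre⟩
  obtain ⟨a, b, hab⟩ : ∃ a b, ¬ G.Reachable a b := by
    simpa [SimpleGraph.Preconnected] using hpre
  refine .inr ⟨{v | G.Reachable a v}, {v | G.Reachable a v}ᶜ, Set.union_compl_self _,
    Set.inter_compl_self _, ⟨a, .rfl⟩, ⟨b, hab⟩, ?_, ?_, ?_⟩
  · intro x hx y hy hne
    exact SimpleGraph.adj_of_reachable_of_not_reachable hstar (fun hxb ↦ hab (hx.trans hxb))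
      (hx.symm.trans hy) hne
  · intro x hx y hy hne
    exact SimpleGraph.adj_of_reachable_of_not_reachable hstar (fun hxa ↦ hx hxa.symm)
      (SimpleGraph.reachable_of_not_reachable_of_not_reachable hstar hx hy) hne
  · intro x hx y hy hadj
    exact hy (hx.trans hadj.reachable)

/-- If a finite simple graph is star 2-connected (no vertex `a` such that the induced
subgraph on the complement of `st(a)` is disconnected), then either it is connected, or
it is the disjoint union of exactly two complete graphs. -/
theorem star_two_connected_structure {V : Type*} [Fintype V] [Nonempty V]
    (G : SimpleGraph V)
    (hstar : ∀ a : V, (G.induce {v : V | ¬ (v = a ∨ G.Adj a v)}).Preconnected) :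
    G.Connected ∨
      ∃ A B : Set V, A ∪ B = Set.univ ∧ A ∩ B = ∅ ∧ A.Nonempty ∧ B.Nonempty ∧
        (∀ x ∈ A, ∀ y ∈ A, x ≠ y → G.Adj x y) ∧
        (∀ x ∈ B, ∀ y ∈ B, x ≠ y → G.Adj x y) ∧
        (∀ x ∈ A, ∀ y ∈ B, ¬ G.Adj x y) :=
  star_two_connected_structure_general G hstar
end
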